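/- Let (L̂,[-,-]̂,{-,-,-}̂,R̂) and (L,[-,-],{-,-,-},R) be modified Rota-Baxter Lie-Yamaguti algebras, and let p : L̂ → L be a surjective linear map satisfying p([a,b]̂) = [p(a),p(b)], p({a,b,c}̂) = {p(a),p(b),p(c)} and p∘R̂ = R∘p, whose kernel V := ker(p) is abelian in the sense that [u,v]̂ = 0, {w,u,v}̂ = 0 and {u,v,w}̂ = 0 for all u,v in V and w in L̂. Let s : L → L̂ be a linear map with p∘s = id_L. Define ρ(x)u := [s(x),u]̂, θ(x,y)u := {u,s(x),s(y)}̂, D(x,y)u := {s(x),s(y),u}̂ for x,y in L and u in V, and let R_V be the restriction of R̂ to V (note R̂(V) ⊆ V since p∘R̂ = R∘p). Then ρ(x), θ(x,y), D(x,y) map V into V, and (V; ρ, θ, D, R_V) is a representation of the modified Rota-Baxter Lie-Yamaguti algebra (L,[-,-],{-,-,-},R), i.e. (R1)–(R7), (4.1) and (4.2) hold. -/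

import Mathlib

/-- A Lie-Yamaguti algebra: bilinear bracket `br`, trilinear bracket `tr`,
satisfying (LY1)-(LY6). -/
structure LieYamaguti (K : Type*) (L : Type*) [Field K] [AddCommGroup L] [Module K L] where
  br : L →ₗ[K] L →ₗ[K] L
  tr : L →ₗ[K] L →ₗ[K] L →ₗ[K] L
  ly1 : ∀ x y, br x y = - br y x
  ly2 : ∀ x y z, tr x y z = - tr y x z
  ly3 : ∀ x y z,
    br (br x y) z + br (br y z) x + br (br z x) y + tr x y z + tr y z x + tr z x y = 0
  ly4 : ∀ x y z a, tr (br x y) z a + tr (br z x) y a + tr (br y z) x a = 0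
  ly5 : ∀ a b x y, tr a b (br x y) = br (tr a b x) y + br x (tr a b y)
  ly6 : ∀ a b x y z,
    tr a b (tr x y z) = tr (tr a b x) y z + tr x (tr a b y) z + tr x y (tr a b z)

/-- A modified Rota-Baxter operator on a Lie-Yamaguti algebra. -/
def IsMRB {K L : Type*} [Field K] [AddCommGroup L] [Module K L]
    (A : LieYamaguti K L) (R : L →ₗ[K] L) : Prop :=
  (∀ x y, A.br (R x) (R y) = R (A.br (R x) y + A.br x (R y)) - A.br x y) ∧
  (∀ x y z, A.tr (R x) (R y) (R z) =
      R (A.tr x (R y) (R z) + A.tr (R x) y (R z) + A.tr (R x) (R y) z + A.tr x y z)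
      - A.tr (R x) y z - A.tr x (R y) z - A.tr x y (R z))

/-!
Since the kernel `V = ker p` is abelian, a bracket of `L̂` with one argument in `V` only depends
on the images under `p` of its other arguments. Hence `s` may be replaced by any lift, so that
`s [x,y]` can be traded for `[s x, s y]̂`, `s {x,y,z}` for `{s x, s y, s z}̂` and `s (R x)` for
`R̂ (s x)`. After these substitutions each of (R1)–(R7) is an instance of (LY1)–(LY6) in `L̂`,
and (4.1), (4.2) are the modified Rota-Baxter identities of `R̂`, all with one argument in `V`.
-/

section AbelianKernel

variable {K Lh L : Type*} [Field K] [AddCommGroup Lh] [Module K Lh] [AddCommGroup L] [Module K L]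
  {Ah : LieYamaguti K Lh} {A : LieYamaguti K L} {p : Lh →ₗ[K] L}

theorem LieYamaguti.tr_swap_eq_zero (Ah : LieYamaguti K Lh) {a b c : Lh}
    (h : Ah.tr b a c = 0) : Ah.tr a b c = 0 := by
  rw [Ah.ly2, h, neg_zero]

theorem p_br_eq_zero_of_ker (hpb : ∀ a b, p (Ah.br a b) = A.br (p a) (p b)) (a : Lh) {u : Lh}
    (hu : p u = 0) : p (Ah.br a u) = 0 := by
  rw [hpb, hu, map_zero]

theorem p_tr_eq_zero_of_ker_left (hpt : ∀ a b c, p (Ah.tr a b c) = A.tr (p a) (p b) (p c))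
    (a b : Lh) {u : Lh} (hu : p u = 0) : p (Ah.tr u a b) = 0 := by
  rw [hpt, hu, map_zero, LinearMap.zero_apply, LinearMap.zero_apply]

theorem p_tr_eq_zero_of_ker_right (hpt : ∀ a b c, p (Ah.tr a b c) = A.tr (p a) (p b) (p c))
    (a b : Lh) {u : Lh} (hu : p u = 0) : p (Ah.tr a b u) = 0 := by
  rw [hpt, hu, map_zero]

theorem br_congr_of_ker (hab1 : ∀ u v, p u = 0 → p v = 0 → Ah.br u v = 0)
    {a a' u : Lh} (hu : p u = 0) (ha : p a = p a') : Ah.br a u = Ah.br a' u := by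
  have h := hab1 (a - a') u (by rw [map_sub, ha, sub_self]) hu
  rwa [map_sub, LinearMap.sub_apply, sub_eq_zero] at h

theorem tr_congr_of_ker_left (hab2 : ∀ w u v, p u = 0 → p v = 0 → Ah.tr w u v = 0)
    (hab3 : ∀ u v w, p u = 0 → p v = 0 → Ah.tr u v w = 0)
    {u a a' b b' : Lh} (hu : p u = 0) (ha : p a = p a') (hb : p b = p b') :
    Ah.tr u a b = Ah.tr u a' b' := by
  have h1 := hab3 u (a - a') b hu (by rw [map_sub, ha, sub_self])
  have h2 := Ah.tr_swap_eq_zero (hab2 a' u (b - b') hu (by rw [map_sub, hb, sub_self]))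
  rw [map_sub, LinearMap.sub_apply, sub_eq_zero] at h1
  rw [map_sub, sub_eq_zero] at h2
  rw [h1, h2]

theorem tr_congr_of_ker_right (hab2 : ∀ w u v, p u = 0 → p v = 0 → Ah.tr w u v = 0)
    {a a' b b' u : Lh} (hu : p u = 0) (ha : p a = p a') (hb : p b = p b') :
    Ah.tr a b u = Ah.tr a' b' u := by
  have h1 := Ah.tr_swap_eq_zero (hab2 b (a - a') u (by rw [map_sub, ha, sub_self]) hu)
  have h2 := hab2 a' (b - b') u (by rw [map_sub, hb, sub_self]) hu
  rw [map_sub, LinearMap.sub_apply, LinearMap.sub_apply, sub_eq_zero] at h1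
  rw [map_sub, LinearMap.sub_apply, sub_eq_zero] at h2
  rw [h1, h2]

variable {s : L →ₗ[K] Lh}

theorem p_section_br (hs : ∀ x, p (s x) = x) (hpb : ∀ a b, p (Ah.br a b) = A.br (p a) (p b))
    (x y : L) : p (s (A.br x y)) = p (Ah.br (s x) (s y)) := by
  rw [hs, hpb, hs, hs]

theorem p_section_tr (hs : ∀ x, p (s x) = x)
    (hpt : ∀ a b c, p (Ah.tr a b c) = A.tr (p a) (p b) (p c)) (x y z : L) :
    p (s (A.tr x y z)) = p (Ah.tr (s x) (s y) (s z)) := by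
  rw [hs, hpt, hs, hs, hs]

theorem p_section_comp {Rh : Lh →ₗ[K] Lh} {R : L →ₗ[K] L} (hs : ∀ x, p (s x) = x)
    (hpR : ∀ a, p (Rh a) = R (p a)) (x : L) : p (s (R x)) = p (Rh (s x)) := by
  rw [hs, hpR, hs]

theorem inducedRep_R1 (hab1 : ∀ u v, p u = 0 → p v = 0 → Ah.br u v = 0)
    (hs : ∀ x, p (s x) = x) (hpb : ∀ a b, p (Ah.br a b) = A.br (p a) (p b))
    (x y : L) {u : Lh} (hu : p u = 0) :
    Ah.tr (s x) (s y) u - Ah.tr u (s y) (s x) + Ah.tr u (s x) (s y) + Ah.br (s (A.br x y)) u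
      - Ah.br (s x) (Ah.br (s y) u) + Ah.br (s y) (Ah.br (s x) u) = 0 := by
  rw [br_congr_of_ker hab1 hu (p_section_br hs hpb x y), Ah.ly2 u (s y),
    Ah.ly1 (s x) (Ah.br (s y) u), Ah.ly1 (s y) (Ah.br (s x) u), Ah.ly1 (s x) u,
    ← Ah.ly3 (s x) (s y) u]
  simp only [map_neg, LinearMap.neg_apply]
  abel

theorem inducedRep_R2 (hab2 : ∀ w u v, p u = 0 → p v = 0 → Ah.tr w u v = 0)
    (hs : ∀ x, p (s x) = x) (hpb : ∀ a b, p (Ah.br a b) = A.br (p a) (p b))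
    (x y z : L) {u : Lh} (hu : p u = 0) :
    Ah.tr (s (A.br x y)) (s z) u + Ah.tr (s (A.br y z)) (s x) u
      + Ah.tr (s (A.br z x)) (s y) u = 0 := by
  rw [tr_congr_of_ker_right hab2 hu (p_section_br hs hpb x y) rfl,
    tr_congr_of_ker_right hab2 hu (p_section_br hs hpb y z) rfl,
    tr_congr_of_ker_right hab2 hu (p_section_br hs hpb z x) rfl,
    ← Ah.ly4 (s x) (s y) (s z) u]
  abel

theorem inducedRep_R3 (hab2 : ∀ w u v, p u = 0 → p v = 0 → Ah.tr w u v = 0)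
    (hab3 : ∀ u v w, p u = 0 → p v = 0 → Ah.tr u v w = 0)
    (hs : ∀ x, p (s x) = x) (hpb : ∀ a b, p (Ah.br a b) = A.br (p a) (p b))
    (x y a : L) {u : Lh} (hu : p u = 0) :
    Ah.tr u (s (A.br x y)) (s a)
      = Ah.tr (Ah.br (s y) u) (s x) (s a) - Ah.tr (Ah.br (s x) u) (s y) (s a) := by
  rw [tr_congr_of_ker_left hab2 hab3 hu (p_section_br hs hpb x y) rfl, Ah.ly2 u,
    Ah.ly1 (s x) u, eq_comm, ← sub_eq_zero, ← Ah.ly4 (s y) u (s x) (s a)]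
  simp only [map_neg, LinearMap.neg_apply]
  abel

theorem inducedRep_R4 (hab1 : ∀ u v, p u = 0 → p v = 0 → Ah.br u v = 0)
    (hs : ∀ x, p (s x) = x) (hpt : ∀ a b c, p (Ah.tr a b c) = A.tr (p a) (p b) (p c))
    (a b x : L) {u : Lh} (hu : p u = 0) :
    Ah.tr (s a) (s b) (Ah.br (s x) u)
      = Ah.br (s x) (Ah.tr (s a) (s b) u) + Ah.br (s (A.tr a b x)) u := by
  rw [br_congr_of_ker hab1 hu (p_section_tr hs hpt a b x), Ah.ly5, add_comm]

theorem inducedRep_R5 (hab2 : ∀ w u v, p u = 0 → p v = 0 → Ah.tr w u v = 0)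
    (hab3 : ∀ u v w, p u = 0 → p v = 0 → Ah.tr u v w = 0)
    (hs : ∀ x, p (s x) = x) (hpb : ∀ a b, p (Ah.br a b) = A.br (p a) (p b))
    (x a b : L) {u : Lh} (hu : p u = 0) :
    Ah.tr u (s x) (s (A.br a b))
      = Ah.br (s a) (Ah.tr u (s x) (s b)) - Ah.br (s b) (Ah.tr u (s x) (s a)) := by
  rw [tr_congr_of_ker_left hab2 hab3 hu rfl (p_section_br hs hpb a b), Ah.ly5,
    Ah.ly1 _ (s b)]
  abel

theorem inducedRep_R6 (hab2 : ∀ w u v, p u = 0 → p v = 0 → Ah.tr w u v = 0)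
    (hab3 : ∀ u v w, p u = 0 → p v = 0 → Ah.tr u v w = 0)
    (hs : ∀ x, p (s x) = x) (hpt : ∀ a b c, p (Ah.tr a b c) = A.tr (p a) (p b) (p c))
    (a b x y : L) {u : Lh} (hu : p u = 0) :
    Ah.tr (s a) (s b) (Ah.tr u (s x) (s y))
      = Ah.tr (Ah.tr (s a) (s b) u) (s x) (s y) + Ah.tr u (s (A.tr a b x)) (s y)
        + Ah.tr u (s x) (s (A.tr a b y)) := by
  rw [tr_congr_of_ker_left hab2 hab3 hu (p_section_tr hs hpt a b x) rfl,
    tr_congr_of_ker_left hab2 hab3 hu rfl (p_section_tr hs hpt a b y), Ah.ly6]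

theorem inducedRep_R7 (hab2 : ∀ w u v, p u = 0 → p v = 0 → Ah.tr w u v = 0)
    (hab3 : ∀ u v w, p u = 0 → p v = 0 → Ah.tr u v w = 0)
    (hs : ∀ x, p (s x) = x) (hpt : ∀ a b c, p (Ah.tr a b c) = A.tr (p a) (p b) (p c))
    (a x y z : L) {u : Lh} (hu : p u = 0) :
    Ah.tr u (s a) (s (A.tr x y z))
      = Ah.tr (Ah.tr u (s a) (s x)) (s y) (s z) - Ah.tr (Ah.tr u (s a) (s y)) (s x) (s z)
        + Ah.tr (s x) (s y) (Ah.tr u (s a) (s z)) := by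
  rw [tr_congr_of_ker_left hab2 hab3 hu rfl (p_section_tr hs hpt x y z), Ah.ly6,
    Ah.ly2 (s x) (Ah.tr u (s a) (s y))]
  abel

variable {Rh : Lh →ₗ[K] Lh} {R : L →ₗ[K] L}

theorem p_comp_eq_zero_of_ker (hpR : ∀ a, p (Rh a) = R (p a)) {u : Lh} (hu : p u = 0) :
    p (Rh u) = 0 := by
  rw [hpR, hu, map_zero]

theorem inducedRep_rotaBaxter_br (hRh : IsMRB Ah Rh)
    (hab1 : ∀ u v, p u = 0 → p v = 0 → Ah.br u v = 0)
    (hs : ∀ x, p (s x) = x) (hpR : ∀ a, p (Rh a) = R (p a)) (x : L) {u : Lh} (hu : p u = 0) :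
    Ah.br (s (R x)) (Rh u) = Rh (Ah.br (s (R x)) u + Ah.br (s x) (Rh u)) - Ah.br (s x) u := by
  rw [br_congr_of_ker hab1 (p_comp_eq_zero_of_ker hpR hu) (p_section_comp hs hpR x),
    br_congr_of_ker hab1 hu (p_section_comp hs hpR x), hRh.1]

theorem inducedRep_rotaBaxter_tr (hRh : IsMRB Ah Rh)
    (hab2 : ∀ w u v, p u = 0 → p v = 0 → Ah.tr w u v = 0)
    (hab3 : ∀ u v w, p u = 0 → p v = 0 → Ah.tr u v w = 0)
    (hs : ∀ x, p (s x) = x) (hpR : ∀ a, p (Rh a) = R (p a)) (x y : L) {u : Lh}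
    (hu : p u = 0) :
    Ah.tr (Rh u) (s (R x)) (s (R y))
      = Rh (Ah.tr u (s (R x)) (s (R y)) + Ah.tr (Rh u) (s (R x)) (s y)
          + Ah.tr (Rh u) (s x) (s (R y)) + Ah.tr u (s x) (s y))
        - Ah.tr u (s (R x)) (s y) - Ah.tr (Rh u) (s x) (s y) - Ah.tr u (s x) (s (R y)) := by
  have hRu := p_comp_eq_zero_of_ker hpR hu
  have hx := p_section_comp hs hpR x
  have hy := p_section_comp hs hpR y
  rw [tr_congr_of_ker_left hab2 hab3 hRu hx hy, tr_congr_of_ker_left hab2 hab3 hu hx hy,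
    tr_congr_of_ker_left hab2 hab3 hRu hx rfl, tr_congr_of_ker_left hab2 hab3 hRu rfl hy,
    tr_congr_of_ker_left hab2 hab3 hu hx rfl, tr_congr_of_ker_left hab2 hab3 hu rfl hy,
    hRh.2 u (s x) (s y)]
  abel_nf

end AbelianKernel

theorem abelianExtension_inducedRep_general (K Lh L : Type*) [Field K]
    [AddCommGroup Lh] [Module K Lh] [AddCommGroup L] [Module K L]
    (Ah : LieYamaguti K Lh) (A : LieYamaguti K L)
    (Rh : Lh →ₗ[K] Lh) (R : L →ₗ[K] L)
    (hRh : IsMRB Ah Rh)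
    (p : Lh →ₗ[K] L)
    (hpb : ∀ a b, p (Ah.br a b) = A.br (p a) (p b))
    (hpt : ∀ a b c, p (Ah.tr a b c) = A.tr (p a) (p b) (p c))
    (hpR : ∀ a, p (Rh a) = R (p a))
    (hab1 : ∀ u v, p u = 0 → p v = 0 → Ah.br u v = 0)
    (hab2 : ∀ w u v, p u = 0 → p v = 0 → Ah.tr w u v = 0)
    (hab3 : ∀ u v w, p u = 0 → p v = 0 → Ah.tr u v w = 0)
    (s : L →ₗ[K] Lh) (hs : ∀ x, p (s x) = x) :
    ∀ (ρ : L → Lh → Lh) (θ D : L → L → Lh → Lh),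
      (∀ x u, ρ x u = Ah.br (s x) u) →
      (∀ x y u, θ x y u = Ah.tr u (s x) (s y)) →
      (∀ x y u, D x y u = Ah.tr (s x) (s y) u) →
      (∀ x u, p u = 0 → p (ρ x u) = 0) ∧
      (∀ x y u, p u = 0 → p (θ x y u) = 0) ∧
      (∀ x y u, p u = 0 → p (D x y u) = 0) ∧
      (∀ u, p u = 0 → p (Rh u) = 0) ∧
      (∀ x y u, p u = 0 →
        D x y u - θ y x u + θ x y u + ρ (A.br x y) u - ρ x (ρ y u) + ρ y (ρ x u) = 0) ∧
      (∀ x y z u, p u = 0 →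
        D (A.br x y) z u + D (A.br y z) x u + D (A.br z x) y u = 0) ∧
      (∀ x y a u, p u = 0 →
        θ (A.br x y) a u = θ x a (ρ y u) - θ y a (ρ x u)) ∧
      (∀ a b x u, p u = 0 →
        D a b (ρ x u) = ρ x (D a b u) + ρ (A.tr a b x) u) ∧
      (∀ x a b u, p u = 0 →
        θ x (A.br a b) u = ρ a (θ x b u) - ρ b (θ x a u)) ∧
      (∀ a b x y u, p u = 0 →
        D a b (θ x y u) = θ x y (D a b u) + θ (A.tr a b x) y u + θ x (A.tr a b y) u) ∧
      (∀ a x y z u, p u = 0 →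
        θ a (A.tr x y z) u = θ y z (θ a x u) - θ x z (θ a y u) + D x y (θ a z u)) ∧
      (∀ x u, p u = 0 →
        ρ (R x) (Rh u) = Rh (ρ (R x) u + ρ x (Rh u)) - ρ x u) ∧
      (∀ x y u, p u = 0 →
        θ (R x) (R y) (Rh u)
          = Rh (θ (R x) (R y) u + θ (R x) y (Rh u) + θ x (R y) (Rh u) + θ x y u)
            - θ (R x) y u - θ x y (Rh u) - θ x (R y) u) := by
  intro ρ θ D hρ hθ hD
  obtain rfl : ρ = fun x u => Ah.br (s x) u := funext₂ hρ
  obtain rfl : θ = fun x y u => Ah.tr u (s x) (s y) := funext₃ hθ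
  obtain rfl : D = fun x y u => Ah.tr (s x) (s y) u := funext₃ hD
  exact ⟨fun x _ => p_br_eq_zero_of_ker hpb (s x),
    fun x y _ => p_tr_eq_zero_of_ker_left hpt (s x) (s y),
    fun x y _ => p_tr_eq_zero_of_ker_right hpt (s x) (s y),
    fun _ => p_comp_eq_zero_of_ker hpR,
    fun x y _ => inducedRep_R1 hab1 hs hpb x y,
    fun x y z _ => inducedRep_R2 hab2 hs hpb x y z,
    fun x y a _ => inducedRep_R3 hab2 hab3 hs hpb x y a,
    fun a b x _ => inducedRep_R4 hab1 hs hpt a b x,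
    fun x a b _ => inducedRep_R5 hab2 hab3 hs hpb x a b,
    fun a b x y _ => inducedRep_R6 hab2 hab3 hs hpt a b x y,
    fun a x y z _ => inducedRep_R7 hab2 hab3 hs hpt a x y z,
    fun x _ => inducedRep_rotaBaxter_br hRh hab1 hs hpR x,
    fun x y _ => inducedRep_rotaBaxter_tr hRh hab2 hab3 hs hpR x y⟩

/-- Any abelian extension `0 → V → L̂ → L → 0` of a modified Rota-Baxter Lie-Yamaguti
algebra, with a section `s`, induces a representation of `(L,R)` on `V = ker p`:
`ρ(x)u := [s(x),u]`, `θ(x,y)u := {u,s(x),s(y)}`, `D(x,y)u := {s(x),s(y),u}` map `V` to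
`V`, `R̂` restricts to `V`, and (R1)-(R7), (4.1), (4.2) hold. -/
theorem abelianExtension_inducedRep (K Lh L : Type*) [Field K] [CharZero K]
    [AddCommGroup Lh] [Module K Lh] [AddCommGroup L] [Module K L]
    (Ah : LieYamaguti K Lh) (A : LieYamaguti K L)
    (Rh : Lh →ₗ[K] Lh) (R : L →ₗ[K] L)
    (hRh : IsMRB Ah Rh) (hR : IsMRB A R)
    (p : Lh →ₗ[K] L) (hsurj : Function.Surjective p)
    (hpb : ∀ a b, p (Ah.br a b) = A.br (p a) (p b))
    (hpt : ∀ a b c, p (Ah.tr a b c) = A.tr (p a) (p b) (p c))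
    (hpR : ∀ a, p (Rh a) = R (p a))
    (hab1 : ∀ u v, p u = 0 → p v = 0 → Ah.br u v = 0)
    (hab2 : ∀ w u v, p u = 0 → p v = 0 → Ah.tr w u v = 0)
    (hab3 : ∀ u v w, p u = 0 → p v = 0 → Ah.tr u v w = 0)
    (s : L →ₗ[K] Lh) (hs : ∀ x, p (s x) = x) :
    ∀ (ρ : L → Lh → Lh) (θ D : L → L → Lh → Lh),
      (∀ x u, ρ x u = Ah.br (s x) u) →
      (∀ x y u, θ x y u = Ah.tr u (s x) (s y)) →
      (∀ x y u, D x y u = Ah.tr (s x) (s y) u) →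
      (∀ x u, p u = 0 → p (ρ x u) = 0) ∧
      (∀ x y u, p u = 0 → p (θ x y u) = 0) ∧
      (∀ x y u, p u = 0 → p (D x y u) = 0) ∧
      (∀ u, p u = 0 → p (Rh u) = 0) ∧
      (∀ x y u, p u = 0 →
        D x y u - θ y x u + θ x y u + ρ (A.br x y) u - ρ x (ρ y u) + ρ y (ρ x u) = 0) ∧
      (∀ x y z u, p u = 0 →
        D (A.br x y) z u + D (A.br y z) x u + D (A.br z x) y u = 0) ∧
      (∀ x y a u, p u = 0 →
        θ (A.br x y) a u = θ x a (ρ y u) - θ y a (ρ x u)) ∧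
      (∀ a b x u, p u = 0 →
        D a b (ρ x u) = ρ x (D a b u) + ρ (A.tr a b x) u) ∧
      (∀ x a b u, p u = 0 →
        θ x (A.br a b) u = ρ a (θ x b u) - ρ b (θ x a u)) ∧
      (∀ a b x y u, p u = 0 →
        D a b (θ x y u) = θ x y (D a b u) + θ (A.tr a b x) y u + θ x (A.tr a b y) u) ∧
      (∀ a x y z u, p u = 0 →
        θ a (A.tr x y z) u = θ y z (θ a x u) - θ x z (θ a y u) + D x y (θ a z u)) ∧
      (∀ x u, p u = 0 →
        ρ (R x) (Rh u) = Rh (ρ (R x) u + ρ x (Rh u)) - ρ x u) ∧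
      (∀ x y u, p u = 0 →
        θ (R x) (R y) (Rh u)
          = Rh (θ (R x) (R y) u + θ (R x) y (Rh u) + θ x (R y) (Rh u) + θ x y u)
            - θ (R x) y u - θ x y (Rh u) - θ x (R y) u) :=
  abelianExtension_inducedRep_general K Lh L Ah A Rh R hRh p hpb hpt hpR hab1 hab2 hab3 s hs
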